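/- arXiv:2306.16239 — 2 statements merged into one kernel-verified Lean document; each statement's English description precedes it below -/
import Mathlib

section
/- Let n ≥ 2, 1 < p < ∞, 1 ≤ q ≤ ∞, L ∈ ℕ with L ≥ 1, let ω_1, …, ω_L ∈ S^{n-1}, and let {D_1, …, D_L} be a Borel partition of S^{n-1} such that for every l and σ_{n-1}-a.e. ω ∈ D_l one has d_{S^{n-1}}(ω, ω_l) ≤ (α_{n,p}/2) · MK_p^{S^{n-1}}(σ_{n-1}, ν_ω)^{p/(n-1+p)} (such a partition exists by Theorem 1). Then for all Borel probability measures μ_1, μ_2 on ℝ^n with finite p-th moments, | ‖ ∑_{l=1}^L MK_p^{ℝ}(R^{ω_l}_♯ μ_1, R^{ω_l}_♯ μ_2) · 1_{D_l} ‖_{L^q(σ_{n-1})} − MK_{p,q}(μ_1, μ_2) | ≤ (α_{n,p}/2) · MK_p^{S^{n-1}}(σ_{n-1}, ν_ω)^{p/(n-1+p)} · ∑_{k=1}^2 (∫_{ℝ^n} |x|^p dμ_k(x))^{1/p}. -/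
open MeasureTheory Metric Real Set
open scoped ENNReal NNReal

noncomputable section

/-- The unit sphere `S^{n-1}` in `ℝ^n`. -/
abbrev Sph (n : ℕ) := Metric.sphere (0 : EuclideanSpace ℝ (Fin n)) 1

/-- The geodesic (Riemannian) distance on the sphere. -/
def gd {n : ℕ} (x y : Sph n) : ℝ :=
  Real.arccos (inner ℝ (x : EuclideanSpace ℝ (Fin n)) (y : EuclideanSpace ℝ (Fin n)))

/-- The normalized Riemannian (uniform) probability measure on the sphere,
realized as normalized `(n-1)`-dimensional Hausdorff measure. -/
def sphProb (n : ℕ) : Measure (Sph n) :=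
  (μH[(n : ℝ) - 1] (Set.univ : Set (Sph n)))⁻¹ • μH[(n : ℝ) - 1]

/-- `|S^m|`, the `m`-dimensional Hausdorff measure of the sphere `S^m ⊂ ℝ^{m+1}`. -/
def sphVol (m : ℕ) : ℝ := (μH[(m : ℝ)] (Set.univ : Set (Sph (m + 1)))).toReal

/-- `γ` is a coupling of `μ` and `ν`. -/
def IsCoupling {X : Type*} [MeasurableSpace X] (γ : Measure (X × X)) (μ ν : Measure X) : Prop :=
  IsProbabilityMeasure γ ∧ γ.map Prod.fst = μ ∧ γ.map Prod.snd = ν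

/-- The `p`-Monge–Kantorovich distance with respect to a distance function `d`. -/
def MKd {X : Type*} [MeasurableSpace X] (d : X → X → ℝ) (p : ℝ) (μ ν : Measure X) : ℝ :=
  (⨅ γ : {γ : Measure (X × X) // IsCoupling γ μ ν},
    ∫⁻ z, ENNReal.ofReal (d z.1 z.2 ^ p) ∂(γ : Measure (X × X))).toReal ^ (1 / p)

/-- The empirical measure `ν_ω` of the family of points `ω`. -/
def emp {n L : ℕ} (ω : Fin L → Sph n) : Measure (Sph n) :=
  (L : ℝ≥0∞)⁻¹ • ∑ l, Measure.dirac (ω l)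

/-- Diameter of a subset of the sphere with respect to the geodesic distance. -/
def gdiam {n : ℕ} (D : Set (Sph n)) : ℝ :=
  sSup ((fun z : Sph n × Sph n => gd z.1 z.2) '' (D ×ˢ D))

/-- The constant `a_p`. -/
def aP (p : ℝ) : ℝ := (1 / 4) * ⨆ i : ℕ, ((i + 1 : ℝ) ^ (-(1 / p)) - (i + 1 : ℝ)⁻¹)

/-- The constant `α_{n,p}`. -/
def alphaC (n : ℕ) (p : ℝ) : ℝ :=
  (2 / aP p) *
    (sphVol (n - 2) / (((n : ℝ) - 1) * sphVol (n - 1)) *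
      (Real.sin (aP p * π) / (aP p * π)) ^ (n - 2)) ^ (-(1 / ((n : ℝ) - 1 + p)))

/-- Projection `R^ω(x) = ⟨x, ω⟩` for `ω ∈ S^{n-1}`. -/
def Rproj {n : ℕ} (ω : Sph n) (x : EuclideanSpace ℝ (Fin n)) : ℝ :=
  inner ℝ x (ω : EuclideanSpace ℝ (Fin n))

/-- The `p`-Monge–Kantorovich distance on `ℝ` (with the usual distance). -/
def MK1 (p : ℝ) (μ ν : Measure ℝ) : ℝ := MKd (fun a b : ℝ => |a - b|) p μ ν

/-- The `(p,q)`-sliced Monge–Kantorovich distance on `ℝ^n`. -/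
def MKpq (n : ℕ) (p : ℝ) (q : ℝ≥0∞) (μ ν : Measure (EuclideanSpace ℝ (Fin n))) : ℝ :=
  (eLpNorm (fun ω : Sph n => MK1 p (μ.map (Rproj ω)) (ν.map (Rproj ω))) q (sphProb n)).toReal

open ProbabilityTheory

lemma chord_le_gd {n : ℕ} (x y : Sph n) :
    ‖(x : EuclideanSpace ℝ (Fin n)) - (y : EuclideanSpace ℝ (Fin n))‖ ≤ gd x y := by
  set E := EuclideanSpace ℝ (Fin n)
  have hx : ‖(x : E)‖ = 1 := by simpa using mem_sphere_zero_iff_norm.mp x.2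
  have hy : ‖(y : E)‖ = 1 := by simpa using mem_sphere_zero_iff_norm.mp y.2
  set t : ℝ := inner ℝ (x : E) (y : E) with ht
  have habs : |t| ≤ 1 := by
    have := norm_inner_le_norm (𝕜 := ℝ) (x : E) (y : E)
    simpa [hx, hy, ht] using this
  have hsq : ‖(x : E) - (y : E)‖ ^ 2 = 2 - 2 * t := by
    rw [@norm_sub_sq_real]; rw [hx, hy]; ring_nf; rfl
  have hcos : Real.cos (gd x y) = t := Real.cos_arccos (by linarith [abs_le.mp habs]) (by linarith [abs_le.mp habs])
  have h1 : 1 - (gd x y) ^ 2 / 2 ≤ t := by rw [← hcos]; exact Real.one_sub_sq_div_two_le_cos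
  have h2 : ‖(x : E) - (y : E)‖ ^ 2 ≤ (gd x y) ^ 2 := by rw [hsq]; nlinarith
  have h3 : (0:ℝ) ≤ gd x y := Real.arccos_nonneg _
  nlinarith [norm_nonneg ((x : E) - (y : E))]

lemma my_eLpNorm_eq {α : Type*} [MeasurableSpace α] {p : ℝ} (hp : 0 < p) (m : Measure α)
    (h : α → ℝ) :
    eLpNorm h (ENNReal.ofReal p) m = (∫⁻ a, ENNReal.ofReal (|h a| ^ p) ∂m) ^ (1 / p) := by
  rw [eLpNorm_eq_lintegral_rpow_enorm_toReal (by simp [ENNReal.ofReal_eq_zero]; linarith)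
    ENNReal.ofReal_ne_top, ENNReal.toReal_ofReal hp.le]
  congr 1
  refine lintegral_congr fun a => ?_
  rw [Real.enorm_eq_ofReal_abs, ENNReal.ofReal_rpow_of_nonneg (abs_nonneg _) hp.le]

lemma measurable_Rproj {n : ℕ} (u : Sph n) : Measurable (Rproj u) :=
  by unfold Rproj; exact (continuous_id.inner continuous_const).measurable

lemma abs_Rproj_le {n : ℕ} (u : Sph n) (x : EuclideanSpace ℝ (Fin n)) : |Rproj u x| ≤ ‖x‖ := by
  have hu : ‖(u : EuclideanSpace ℝ (Fin n))‖ = 1 := by simpa using mem_sphere_zero_iff_norm.mp u.2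
  have := norm_inner_le_norm (𝕜 := ℝ) x (u : EuclideanSpace ℝ (Fin n))
  simpa [Rproj, hu] using this

section Core

variable {n : ℕ} {p : ℝ}

local notation "E" => EuclideanSpace ℝ (Fin n)

lemma measurable_cost_integrand (hp : 0 < p) :
    Measurable fun z : ℝ × ℝ => ENNReal.ofReal (|z.1 - z.2| ^ p) :=
  ENNReal.measurable_ofReal.comp ((Real.continuous_rpow_const hp.le).measurable.comp ((measurable_fst.sub measurable_snd).abs))

lemma coupling_transport (hp : 1 < p) (μ₁ μ₂ : Measure E)
    [IsProbabilityMeasure μ₁] [IsProbabilityMeasure μ₂] (u v : Sph n)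
    (γ : Measure (ℝ × ℝ)) (hγ : IsCoupling γ (μ₁.map (Rproj u)) (μ₂.map (Rproj u))) :
    ∃ γ' : Measure (ℝ × ℝ), IsCoupling γ' (μ₁.map (Rproj v)) (μ₂.map (Rproj v)) ∧
      (∫⁻ z : ℝ × ℝ, ENNReal.ofReal (|z.1 - z.2| ^ p) ∂γ') ^ (1/p) ≤
        (∫⁻ z : ℝ × ℝ, ENNReal.ofReal (|z.1 - z.2| ^ p) ∂γ) ^ (1/p) +
        ENNReal.ofReal ‖(v : E) - (u : E)‖ *
          ((∫⁻ x, ENNReal.ofReal (‖x‖ ^ p) ∂μ₁) ^ (1/p) +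
           (∫⁻ x, ENNReal.ofReal (‖x‖ ^ p) ∂μ₂) ^ (1/p)) := by
  have hp0 : (0:ℝ) < p := lt_trans one_pos hp
  have hmRu := measurable_Rproj u
  have hmRv := measurable_Rproj v
  haveI : IsProbabilityMeasure γ := hγ.1
  -- disintegration of μ₁ and μ₂ over the projection Rproj u
  have hg₁ : Measurable fun x : E => (Rproj u x, x) := hmRu.prodMk measurable_id
  have hg₂ := hg₁
  set ρ₁ : Measure (ℝ × E) := μ₁.map (fun x => (Rproj u x, x)) with hρ₁
  set ρ₂ : Measure (ℝ × E) := μ₂.map (fun x => (Rproj u x, x)) with hρ₂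
  haveI : IsProbabilityMeasure ρ₁ := Measure.isProbabilityMeasure_map hg₁.aemeasurable
  haveI : IsProbabilityMeasure ρ₂ := Measure.isProbabilityMeasure_map hg₂.aemeasurable
  set κ₁ := ρ₁.condKernel with hκ₁
  set κ₂ := ρ₂.condKernel with hκ₂
  have hd₁ : ρ₁.fst ⊗ₘ κ₁ = ρ₁ := ρ₁.disintegrate _
  have hd₂ : ρ₂.fst ⊗ₘ κ₂ = ρ₂ := ρ₂.disintegrate _
  have hfst₁ : ρ₁.fst = μ₁.map (Rproj u) := by
    rw [hρ₁]; exact Measure.fst_map_prodMk measurable_id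
  have hfst₂ : ρ₂.fst = μ₂.map (Rproj u) := by
    rw [hρ₂]; exact Measure.fst_map_prodMk measurable_id
  set K : Kernel (ℝ × ℝ) (E × E) :=
    (κ₁.comap Prod.fst measurable_fst) ×ₖ (κ₂.comap Prod.snd measurable_snd) with hK
  haveI hKmarkov : IsMarkovKernel K := by rw [hK]; infer_instance
  have hKapp : ∀ st : ℝ × ℝ, K st = (κ₁ st.1).prod (κ₂ st.2) := fun st => by
    rw [hK, Kernel.prod_apply, Kernel.comap_apply, Kernel.comap_apply]
  set m : Measure ((ℝ × ℝ) × E × E) := γ ⊗ₘ K with hm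
  haveI : IsProbabilityMeasure m := by rw [hm]; infer_instance
  have hw1 : Measurable fun w : (ℝ × ℝ) × E × E => w.2.1 := measurable_fst.comp measurable_snd
  have hw2 : Measurable fun w : (ℝ × ℝ) × E × E => w.2.2 := measurable_snd.comp measurable_snd
  -- marginals of the second (E × E) component of m
  have hmap₁ : m.map (fun w : (ℝ × ℝ) × E × E => w.2.1) = μ₁ := by
    ext s hs
    rw [Measure.map_apply hw1 hs, hm, Measure.compProd_apply (hw1 hs)]
    have h1 : ∀ st : ℝ × ℝ,
        (K st) (Prod.mk st ⁻¹' ((fun w : (ℝ × ℝ) × E × E => w.2.1) ⁻¹' s)) = (κ₁ st.1) s := by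
      intro st
      have he : (Prod.mk st ⁻¹' ((fun w : (ℝ × ℝ) × E × E => w.2.1) ⁻¹' s)) = s ×ˢ Set.univ := by
        ext xy; simp
      rw [he, hKapp, Measure.prod_prod, measure_univ, mul_one]
    simp_rw [h1]
    rw [show ∫⁻ st : ℝ × ℝ, (κ₁ st.1) s ∂γ = ∫⁻ a, (κ₁ a) s ∂(γ.map Prod.fst) from
      (lintegral_map (κ₁.measurable_coe hs) measurable_fst).symm, hγ.2.1, ← hfst₁,
      show ∫⁻ a, (κ₁ a) s ∂ρ₁.fst = (ρ₁.fst ⊗ₘ κ₁) (Set.univ ×ˢ s) from by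
        rw [Measure.compProd_apply_prod MeasurableSet.univ hs, setLIntegral_univ],
      hd₁, hρ₁, Measure.map_apply hg₁ (MeasurableSet.univ.prod hs)]
    congr 1
    ext x; simp
  have hmap₂ : m.map (fun w : (ℝ × ℝ) × E × E => w.2.2) = μ₂ := by
    ext s hs
    rw [Measure.map_apply hw2 hs, hm, Measure.compProd_apply (hw2 hs)]
    have h1 : ∀ st : ℝ × ℝ,
        (K st) (Prod.mk st ⁻¹' ((fun w : (ℝ × ℝ) × E × E => w.2.2) ⁻¹' s)) = (κ₂ st.2) s := by
      intro st
      have he : (Prod.mk st ⁻¹' ((fun w : (ℝ × ℝ) × E × E => w.2.2) ⁻¹' s)) = Set.univ ×ˢ s := by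
        ext xy; simp
      rw [he, hKapp, Measure.prod_prod, measure_univ, one_mul]
    simp_rw [h1]
    rw [show ∫⁻ st : ℝ × ℝ, (κ₂ st.2) s ∂γ = ∫⁻ a, (κ₂ a) s ∂(γ.map Prod.snd) from
      (lintegral_map (κ₂.measurable_coe hs) measurable_snd).symm, hγ.2.2, ← hfst₂,
      show ∫⁻ a, (κ₂ a) s ∂ρ₂.fst = (ρ₂.fst ⊗ₘ κ₂) (Set.univ ×ˢ s) from by
        rw [Measure.compProd_apply_prod MeasurableSet.univ hs, setLIntegral_univ],
      hd₂, hρ₂, Measure.map_apply hg₂ (MeasurableSet.univ.prod hs)]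
    congr 1
    ext x; simp
  -- a.e. fiber property
  have hsetu : MeasurableSet {z : ℝ × E | Rproj u z.2 = z.1} :=
    measurableSet_eq_fun ((measurable_Rproj u).comp measurable_snd) measurable_fst
  have hae₁ : ∀ᵐ z : ℝ × E ∂ρ₁, Rproj u z.2 = z.1 := by
    rw [hρ₁, MeasureTheory.ae_map_iff hg₁.aemeasurable hsetu]
    filter_upwards with x; rfl
  have hae₂ : ∀ᵐ z : ℝ × E ∂ρ₂, Rproj u z.2 = z.1 := by
    rw [hρ₂, MeasureTheory.ae_map_iff hg₂.aemeasurable hsetu]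
    filter_upwards with x; rfl
  rw [← hd₁] at hae₁
  rw [← hd₂] at hae₂
  have hQ₁ : ∀ᵐ a ∂(ρ₁.fst), (κ₁ a) {x : E | Rproj u x ≠ a} = 0 := by
    filter_upwards [Measure.ae_ae_of_ae_compProd hae₁] with a ha
    rw [ae_iff] at ha; exact ha
  have hQ₂ : ∀ᵐ a ∂(ρ₂.fst), (κ₂ a) {x : E | Rproj u x ≠ a} = 0 := by
    filter_upwards [Measure.ae_ae_of_ae_compProd hae₂] with a ha
    rw [ae_iff] at ha; exact ha
  have hNf₁ : Measurable fun a : ℝ => (κ₁ a) {x : E | Rproj u x ≠ a} :=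
    Kernel.measurable_kernel_prodMk_left (κ := κ₁)
      (t := {z : ℝ × E | Rproj u z.2 ≠ z.1}) hsetu.compl
  have hNf₂ : Measurable fun a : ℝ => (κ₂ a) {x : E | Rproj u x ≠ a} :=
    Kernel.measurable_kernel_prodMk_left (κ := κ₂)
      (t := {z : ℝ × E | Rproj u z.2 ≠ z.1}) hsetu.compl
  have hγfib₁ : ∀ᵐ st : ℝ × ℝ ∂γ, (κ₁ st.1) {x : E | Rproj u x ≠ st.1} = 0 := by
    have hN : MeasurableSet {a : ℝ | (κ₁ a) {x : E | Rproj u x ≠ a} ≠ 0} :=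
      (hNf₁ (measurableSet_singleton 0)).compl
    have hzero : γ (Prod.fst ⁻¹' {a : ℝ | (κ₁ a) {x : E | Rproj u x ≠ a} ≠ 0}) = 0 := by
      rw [← Measure.map_apply measurable_fst hN, hγ.2.1, ← hfst₁]
      exact ae_iff.mp hQ₁
    rw [ae_iff]; exact hzero
  have hγfib₂ : ∀ᵐ st : ℝ × ℝ ∂γ, (κ₂ st.2) {x : E | Rproj u x ≠ st.2} = 0 := by
    have hN : MeasurableSet {a : ℝ | (κ₂ a) {x : E | Rproj u x ≠ a} ≠ 0} :=
      (hNf₂ (measurableSet_singleton 0)).compl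
    have hzero : γ (Prod.snd ⁻¹' {a : ℝ | (κ₂ a) {x : E | Rproj u x ≠ a} ≠ 0}) = 0 := by
      rw [← Measure.map_apply measurable_snd hN, hγ.2.2, ← hfst₂]
      exact ae_iff.mp hQ₂
    rw [ae_iff]; exact hzero
  have haeK : ∀ᵐ w : (ℝ × ℝ) × E × E ∂m,
      Rproj u w.2.1 = w.1.1 ∧ Rproj u w.2.2 = w.1.2 := by
    rw [hm]
    apply Measure.ae_compProd_of_ae_ae
    · have h1 : MeasurableSet {w : (ℝ × ℝ) × E × E | Rproj u w.2.1 = w.1.1} :=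
        measurableSet_eq_fun ((measurable_Rproj u).comp hw1) (measurable_fst.comp measurable_fst)
      have h2 : MeasurableSet {w : (ℝ × ℝ) × E × E | Rproj u w.2.2 = w.1.2} :=
        measurableSet_eq_fun ((measurable_Rproj u).comp hw2) (measurable_snd.comp measurable_fst)
      exact h1.inter h2
    · filter_upwards [hγfib₁, hγfib₂] with st h1 h2
      rw [hKapp]
      rw [ae_iff]
      refine measure_mono_null (fun xy hxy => ?_)
        (measure_union_null
          (show ((κ₁ st.1).prod (κ₂ st.2)) ({x : E | Rproj u x ≠ st.1} ×ˢ (Set.univ : Set E)) = 0 by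
            rw [Measure.prod_prod, h1, zero_mul])
          (show ((κ₁ st.1).prod (κ₂ st.2)) ((Set.univ : Set E) ×ˢ {y : E | Rproj u y ≠ st.2}) = 0 by
            rw [Measure.prod_prod, h2, mul_zero]))
      simp only [Set.mem_setOf_eq, not_and_or] at hxy
      rcases hxy with h | h
      · exact Set.mem_union_left _ (by simp [h])
      · exact Set.mem_union_right _ (by simp [h])
  -- the transported coupling
  have tri : ∀ a b : ℝ, |a - b| ≤ |a| + |b| := fun a b => by
    rw [sub_eq_add_neg]; exact (abs_add_le _ _).trans (by rw [abs_neg])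
  set Φ : ((ℝ × ℝ) × E × E) → ℝ × ℝ := fun w => (Rproj v w.2.1, Rproj v w.2.2) with hΦ
  have hΦm : Measurable Φ := (hmRv.comp hw1).prodMk (hmRv.comp hw2)
  refine ⟨m.map Φ, ⟨?_, ?_, ?_⟩, ?_⟩
  · exact Measure.isProbabilityMeasure_map hΦm.aemeasurable
  · rw [Measure.map_map measurable_fst hΦm,
      show (Prod.fst ∘ Φ) = (Rproj v ∘ fun w : (ℝ × ℝ) × E × E => w.2.1) from rfl,
      ← Measure.map_map hmRv hw1, hmap₁]
  · rw [Measure.map_map measurable_snd hΦm,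
      show (Prod.snd ∘ Φ) = (Rproj v ∘ fun w : (ℝ × ℝ) × E × E => w.2.2) from rfl,
      ← Measure.map_map hmRv hw2, hmap₂]
  set pe : ℝ≥0∞ := ENNReal.ofReal p with hpe
  have hpe1 : 1 ≤ pe := by rw [hpe]; exact ENNReal.one_le_ofReal.mpr hp.le
  set c0 : ℝ := ‖(v : E) - (u : E)‖ with hc0
  have hc0nn : 0 ≤ c0 := by rw [hc0]; exact norm_nonneg _
  have hcost' : ∫⁻ z : ℝ × ℝ, ENNReal.ofReal (|z.1 - z.2| ^ p) ∂(m.map Φ)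
      = ∫⁻ w, ENNReal.ofReal (|Rproj v w.2.1 - Rproj v w.2.2| ^ p) ∂m :=
    lintegral_map (measurable_cost_integrand hp0) hΦm
  have hptw : ∀ w : (ℝ × ℝ) × E × E,
      |Rproj v w.2.1 - Rproj v w.2.2| ≤
        |Rproj u w.2.1 - Rproj u w.2.2| + (c0 * ‖w.2.1‖ + c0 * ‖w.2.2‖) := by
    intro w
    have e1 : ∀ x : E, Rproj v x - Rproj u x = (inner ℝ x ((v : E) - (u : E)) : ℝ) := fun x => by
      simp only [Rproj, inner_sub_right]
    have e2 : Rproj v w.2.1 - Rproj v w.2.2 =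
        (Rproj u w.2.1 - Rproj u w.2.2) +
          ((inner ℝ w.2.1 ((v : E) - (u : E)) : ℝ) - (inner ℝ w.2.2 ((v : E) - (u : E)) : ℝ)) := by
      rw [← e1, ← e1]; ring
    have hx : |(inner ℝ w.2.1 ((v : E) - (u : E)) : ℝ)| ≤ c0 * ‖w.2.1‖ := by
      have h := norm_inner_le_norm (𝕜 := ℝ) w.2.1 ((v : E) - (u : E))
      rw [Real.norm_eq_abs] at h
      calc |(inner ℝ w.2.1 ((v : E) - (u : E)) : ℝ)| ≤ ‖w.2.1‖ * ‖(v : E) - (u : E)‖ := h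
        _ = c0 * ‖w.2.1‖ := by rw [hc0]; ring
    have hy : |(inner ℝ w.2.2 ((v : E) - (u : E)) : ℝ)| ≤ c0 * ‖w.2.2‖ := by
      have h := norm_inner_le_norm (𝕜 := ℝ) w.2.2 ((v : E) - (u : E))
      rw [Real.norm_eq_abs] at h
      calc |(inner ℝ w.2.2 ((v : E) - (u : E)) : ℝ)| ≤ ‖w.2.2‖ * ‖(v : E) - (u : E)‖ := h
        _ = c0 * ‖w.2.2‖ := by rw [hc0]; ring
    calc |Rproj v w.2.1 - Rproj v w.2.2|
        ≤ |Rproj u w.2.1 - Rproj u w.2.2| +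
            |(inner ℝ w.2.1 ((v : E) - (u : E)) : ℝ) - (inner ℝ w.2.2 ((v : E) - (u : E)) : ℝ)| := by
          rw [e2]; exact abs_add_le _ _
      _ ≤ |Rproj u w.2.1 - Rproj u w.2.2| + (c0 * ‖w.2.1‖ + c0 * ‖w.2.2‖) := by
          have := (tri (inner ℝ w.2.1 ((v : E) - (u : E)) : ℝ) (inner ℝ w.2.2 ((v : E) - (u : E)) : ℝ))
          have := add_le_add hx hy
          linarith
  have hasm0 : AEStronglyMeasurable
      (fun w : (ℝ × ℝ) × E × E => |Rproj u w.2.1 - Rproj u w.2.2|) m :=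
    (((hmRu.comp hw1).sub (hmRu.comp hw2)).abs).aestronglyMeasurable
  have hasm1 : AEStronglyMeasurable (fun w : (ℝ × ℝ) × E × E => c0 * ‖w.2.1‖) m :=
    (measurable_const.mul hw1.norm).aestronglyMeasurable
  have hasm2 : AEStronglyMeasurable (fun w : (ℝ × ℝ) × E × E => c0 * ‖w.2.2‖) m :=
    (measurable_const.mul hw2.norm).aestronglyMeasurable
  have hkey : eLpNorm (fun w : (ℝ × ℝ) × E × E => Rproj v w.2.1 - Rproj v w.2.2) pe m ≤
      eLpNorm (fun w : (ℝ × ℝ) × E × E => |Rproj u w.2.1 - Rproj u w.2.2|) pe m +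
      (eLpNorm (fun w : (ℝ × ℝ) × E × E => c0 * ‖w.2.1‖) pe m +
        eLpNorm (fun w : (ℝ × ℝ) × E × E => c0 * ‖w.2.2‖) pe m) := by
    calc eLpNorm (fun w : (ℝ × ℝ) × E × E => Rproj v w.2.1 - Rproj v w.2.2) pe m
        ≤ eLpNorm (fun w : (ℝ × ℝ) × E × E =>
            |Rproj u w.2.1 - Rproj u w.2.2| + (c0 * ‖w.2.1‖ + c0 * ‖w.2.2‖)) pe m := by
          apply eLpNorm_mono
          intro w
          rw [Real.norm_eq_abs, Real.norm_eq_abs]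
          exact (hptw w).trans (le_abs_self _)
      _ ≤ eLpNorm (fun w : (ℝ × ℝ) × E × E => |Rproj u w.2.1 - Rproj u w.2.2|) pe m
            + eLpNorm (fun w : (ℝ × ℝ) × E × E => c0 * ‖w.2.1‖ + c0 * ‖w.2.2‖) pe m :=
          eLpNorm_add_le hasm0 (hasm1.add hasm2) hpe1
      _ ≤ _ := add_le_add_right (eLpNorm_add_le hasm1 hasm2 hpe1) _
  have habs_eq : eLpNorm (fun w : (ℝ × ℝ) × E × E => |Rproj u w.2.1 - Rproj u w.2.2|) pe m
      = (∫⁻ z : ℝ × ℝ, ENNReal.ofReal (|z.1 - z.2| ^ p) ∂γ) ^ (1/p) := by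
    rw [hpe, my_eLpNorm_eq hp0]
    congr 1
    have hfstm : m.map Prod.fst = γ := by rw [hm]; exact Measure.fst_compProd γ K
    calc ∫⁻ w, ENNReal.ofReal (|(|Rproj u w.2.1 - Rproj u w.2.2|)| ^ p) ∂m
        = ∫⁻ w, ENNReal.ofReal (|w.1.1 - w.1.2| ^ p) ∂m := by
          refine lintegral_congr_ae ?_
          filter_upwards [haeK] with w hw
          rw [abs_abs, hw.1, hw.2]
      _ = ∫⁻ z : ℝ × ℝ, ENNReal.ofReal (|z.1 - z.2| ^ p) ∂γ := by
          rw [← hfstm]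
          exact (lintegral_map (measurable_cost_integrand hp0) measurable_fst).symm
  have hnorm_int : Measurable fun x : E => ENNReal.ofReal (‖x‖ ^ p) :=
    ENNReal.measurable_ofReal.comp ((Real.continuous_rpow_const hp0.le).measurable.comp measurable_norm)
  have hm1_eq : eLpNorm (fun w : (ℝ × ℝ) × E × E => c0 * ‖w.2.1‖) pe m
      = ENNReal.ofReal c0 * (∫⁻ x, ENNReal.ofReal (‖x‖ ^ p) ∂μ₁) ^ (1/p) := by
    rw [show (fun w : (ℝ × ℝ) × E × E => c0 * ‖w.2.1‖)
        = c0 • (fun w : (ℝ × ℝ) × E × E => ‖w.2.1‖) from rfl,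
      eLpNorm_const_smul, hpe, my_eLpNorm_eq hp0]
    congr 1
    · rw [Real.enorm_eq_ofReal_abs, abs_of_nonneg hc0nn]
    · congr 1
      calc ∫⁻ w, ENNReal.ofReal (|(‖w.2.1‖)| ^ p) ∂m
          = ∫⁻ w, ENNReal.ofReal (‖w.2.1‖ ^ p) ∂m :=
            lintegral_congr fun w => by rw [abs_norm]
        _ = ∫⁻ x, ENNReal.ofReal (‖x‖ ^ p) ∂μ₁ := by
            rw [← hmap₁]; exact (lintegral_map hnorm_int hw1).symm
  have hm2_eq : eLpNorm (fun w : (ℝ × ℝ) × E × E => c0 * ‖w.2.2‖) pe m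
      = ENNReal.ofReal c0 * (∫⁻ x, ENNReal.ofReal (‖x‖ ^ p) ∂μ₂) ^ (1/p) := by
    rw [show (fun w : (ℝ × ℝ) × E × E => c0 * ‖w.2.2‖)
        = c0 • (fun w : (ℝ × ℝ) × E × E => ‖w.2.2‖) from rfl,
      eLpNorm_const_smul, hpe, my_eLpNorm_eq hp0]
    congr 1
    · rw [Real.enorm_eq_ofReal_abs, abs_of_nonneg hc0nn]
    · congr 1
      calc ∫⁻ w, ENNReal.ofReal (|(‖w.2.2‖)| ^ p) ∂m
          = ∫⁻ w, ENNReal.ofReal (‖w.2.2‖ ^ p) ∂m :=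
            lintegral_congr fun w => by rw [abs_norm]
        _ = ∫⁻ x, ENNReal.ofReal (‖x‖ ^ p) ∂μ₂ := by
            rw [← hmap₂]; exact (lintegral_map hnorm_int hw2).symm
  calc (∫⁻ z : ℝ × ℝ, ENNReal.ofReal (|z.1 - z.2| ^ p) ∂(m.map Φ)) ^ (1/p)
      = eLpNorm (fun w : (ℝ × ℝ) × E × E => Rproj v w.2.1 - Rproj v w.2.2) pe m := by
        rw [hcost', hpe, my_eLpNorm_eq hp0]
    _ ≤ _ := hkey
    _ = (∫⁻ z : ℝ × ℝ, ENNReal.ofReal (|z.1 - z.2| ^ p) ∂γ) ^ (1/p) +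
        ENNReal.ofReal c0 *
          ((∫⁻ x, ENNReal.ofReal (‖x‖ ^ p) ∂μ₁) ^ (1/p) +
            (∫⁻ x, ENNReal.ofReal (‖x‖ ^ p) ∂μ₂) ^ (1/p)) := by
        rw [habs_eq, hm1_eq, hm2_eq, mul_add]



end Core



section Core2
variable {n : ℕ} {p : ℝ}
local notation "E" => EuclideanSpace ℝ (Fin n)

lemma prod_coupling (μ₁ μ₂ : Measure E) [IsProbabilityMeasure μ₁] [IsProbabilityMeasure μ₂]
    (u : Sph n) :
    IsCoupling ((μ₁.map (Rproj u)).prod (μ₂.map (Rproj u))) (μ₁.map (Rproj u))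
      (μ₂.map (Rproj u)) := by
  haveI h1 : IsProbabilityMeasure (μ₁.map (Rproj u)) :=
    Measure.isProbabilityMeasure_map (measurable_Rproj u).aemeasurable
  haveI h2 : IsProbabilityMeasure (μ₂.map (Rproj u)) :=
    Measure.isProbabilityMeasure_map (measurable_Rproj u).aemeasurable
  exact ⟨inferInstance, Measure.fst_prod, Measure.snd_prod⟩

lemma prod_cost_le (hp : 1 < p) (μ₁ μ₂ : Measure E) [IsProbabilityMeasure μ₁]
    [IsProbabilityMeasure μ₂] (u : Sph n) :
    (∫⁻ z : ℝ × ℝ, ENNReal.ofReal (|z.1 - z.2| ^ p)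
        ∂((μ₁.map (Rproj u)).prod (μ₂.map (Rproj u)))) ^ (1/p) ≤
      (∫⁻ x, ENNReal.ofReal (‖x‖ ^ p) ∂μ₁) ^ (1/p) +
      (∫⁻ x, ENNReal.ofReal (‖x‖ ^ p) ∂μ₂) ^ (1/p) := by
  have hp0 : (0:ℝ) < p := lt_trans one_pos hp
  haveI h1 : IsProbabilityMeasure (μ₁.map (Rproj u)) :=
    Measure.isProbabilityMeasure_map (measurable_Rproj u).aemeasurable
  haveI h2 : IsProbabilityMeasure (μ₂.map (Rproj u)) :=
    Measure.isProbabilityMeasure_map (measurable_Rproj u).aemeasurable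
  set pr := (μ₁.map (Rproj u)).prod (μ₂.map (Rproj u)) with hpr
  set pe : ℝ≥0∞ := ENNReal.ofReal p with hpe
  have hpe1 : 1 ≤ pe := by rw [hpe]; exact ENNReal.one_le_ofReal.mpr hp.le
  have habs : Measurable fun a : ℝ => ENNReal.ofReal (|a| ^ p) :=
    ENNReal.measurable_ofReal.comp
      ((Real.continuous_rpow_const hp0.le).measurable.comp measurable_abs)
  have hnorm_int : Measurable fun x : E => ENNReal.ofReal (‖x‖ ^ p) :=
    ENNReal.measurable_ofReal.comp
      ((Real.continuous_rpow_const hp0.le).measurable.comp measurable_norm)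
  have e0 : (∫⁻ z : ℝ × ℝ, ENNReal.ofReal (|z.1 - z.2| ^ p) ∂pr) ^ (1/p)
      = eLpNorm (fun z : ℝ × ℝ => z.1 - z.2) pe pr := by
    rw [hpe, my_eLpNorm_eq hp0]
  have e1 : eLpNorm (fun z : ℝ × ℝ => z.1) pe pr ≤
      (∫⁻ x, ENNReal.ofReal (‖x‖ ^ p) ∂μ₁) ^ (1/p) := by
    rw [hpe, my_eLpNorm_eq hp0]
    refine ENNReal.rpow_le_rpow ?_ (by positivity)
    have hf : pr.map Prod.fst = μ₁.map (Rproj u) := Measure.fst_prod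
    calc ∫⁻ z : ℝ × ℝ, ENNReal.ofReal (|z.1| ^ p) ∂pr
        = ∫⁻ a, ENNReal.ofReal (|a| ^ p) ∂(pr.map Prod.fst) :=
          (lintegral_map habs measurable_fst).symm
      _ = ∫⁻ x, ENNReal.ofReal (|Rproj u x| ^ p) ∂μ₁ := by
          rw [hf, lintegral_map habs (measurable_Rproj u)]
      _ ≤ ∫⁻ x, ENNReal.ofReal (‖x‖ ^ p) ∂μ₁ :=
          lintegral_mono fun x => ENNReal.ofReal_le_ofReal
            (Real.rpow_le_rpow (abs_nonneg _) (abs_Rproj_le u x) hp0.le)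
  have e2 : eLpNorm (fun z : ℝ × ℝ => z.2) pe pr ≤
      (∫⁻ x, ENNReal.ofReal (‖x‖ ^ p) ∂μ₂) ^ (1/p) := by
    rw [hpe, my_eLpNorm_eq hp0]
    refine ENNReal.rpow_le_rpow ?_ (by positivity)
    have hf : pr.map Prod.snd = μ₂.map (Rproj u) := Measure.snd_prod
    calc ∫⁻ z : ℝ × ℝ, ENNReal.ofReal (|z.2| ^ p) ∂pr
        = ∫⁻ a, ENNReal.ofReal (|a| ^ p) ∂(pr.map Prod.snd) :=
          (lintegral_map habs measurable_snd).symm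
      _ = ∫⁻ x, ENNReal.ofReal (|Rproj u x| ^ p) ∂μ₂ := by
          rw [hf, lintegral_map habs (measurable_Rproj u)]
      _ ≤ ∫⁻ x, ENNReal.ofReal (‖x‖ ^ p) ∂μ₂ :=
          lintegral_mono fun x => ENNReal.ofReal_le_ofReal
            (Real.rpow_le_rpow (abs_nonneg _) (abs_Rproj_le u x) hp0.le)
  calc (∫⁻ z : ℝ × ℝ, ENNReal.ofReal (|z.1 - z.2| ^ p) ∂pr) ^ (1/p)
      = eLpNorm (fun z : ℝ × ℝ => z.1 - z.2) pe pr := e0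
    _ ≤ eLpNorm (fun z : ℝ × ℝ => z.1) pe pr + eLpNorm (fun z : ℝ × ℝ => z.2) pe pr :=
        eLpNorm_sub_le measurable_fst.aestronglyMeasurable measurable_snd.aestronglyMeasurable hpe1
    _ ≤ _ := add_le_add e1 e2

end Core2


section Core3
variable {n : ℕ} {p : ℝ}
local notation "E" => EuclideanSpace ℝ (Fin n)

lemma mk1_lip (hp : 1 < p) (μ₁ μ₂ : Measure E) [IsProbabilityMeasure μ₁]
    [IsProbabilityMeasure μ₂]
    (hμ₁ : Integrable (fun x => ‖x‖ ^ p) μ₁) (hμ₂ : Integrable (fun x => ‖x‖ ^ p) μ₂)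
    (u v : Sph n) :
    MK1 p (μ₁.map (Rproj v)) (μ₂.map (Rproj v)) ≤
      MK1 p (μ₁.map (Rproj u)) (μ₂.map (Rproj u)) +
        ‖(v : E) - (u : E)‖ *
          ((∫ x, ‖x‖ ^ p ∂μ₁) ^ (1/p) + (∫ x, ‖x‖ ^ p ∂μ₂) ^ (1/p)) := by
  have hp0 : (0:ℝ) < p := lt_trans one_pos hp
  have h1p : (0:ℝ) < 1/p := by positivity
  set m₁ : ℝ≥0∞ := ∫⁻ x, ENNReal.ofReal (‖x‖ ^ p) ∂μ₁ with hm₁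
  set m₂ : ℝ≥0∞ := ∫⁻ x, ENNReal.ofReal (‖x‖ ^ p) ∂μ₂ with hm₂
  set I₁ : ℝ := ∫ x, ‖x‖ ^ p ∂μ₁ with hI₁
  set I₂ : ℝ := ∫ x, ‖x‖ ^ p ∂μ₂ with hI₂
  have hI₁nn : 0 ≤ I₁ := integral_nonneg fun x => Real.rpow_nonneg (norm_nonneg _) _
  have hI₂nn : 0 ≤ I₂ := integral_nonneg fun x => Real.rpow_nonneg (norm_nonneg _) _
  have hm₁eq : m₁ = ENNReal.ofReal I₁ := by
    rw [hm₁, hI₁, ← ofReal_integral_eq_lintegral_ofReal hμ₁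
      (Filter.Eventually.of_forall fun x => Real.rpow_nonneg (norm_nonneg _) _)]
  have hm₂eq : m₂ = ENNReal.ofReal I₂ := by
    rw [hm₂, hI₂, ← ofReal_integral_eq_lintegral_ofReal hμ₂
      (Filter.Eventually.of_forall fun x => Real.rpow_nonneg (norm_nonneg _) _)]
  have hm₁p : m₁ ^ (1/p) = ENNReal.ofReal (I₁ ^ (1/p)) := by
    rw [hm₁eq, ENNReal.ofReal_rpow_of_nonneg hI₁nn h1p.le]
  have hm₂p : m₂ ^ (1/p) = ENNReal.ofReal (I₂ ^ (1/p)) := by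
    rw [hm₂eq, ENNReal.ofReal_rpow_of_nonneg hI₂nn h1p.le]
  set Wu : ℝ≥0∞ := ⨅ γ : {γ : Measure (ℝ × ℝ) //
      IsCoupling γ (μ₁.map (Rproj u)) (μ₂.map (Rproj u))},
    ∫⁻ z, ENNReal.ofReal (|z.1 - z.2| ^ p) ∂(γ : Measure (ℝ × ℝ)) with hWu
  set Wv : ℝ≥0∞ := ⨅ γ : {γ : Measure (ℝ × ℝ) //
      IsCoupling γ (μ₁.map (Rproj v)) (μ₂.map (Rproj v))},
    ∫⁻ z, ENNReal.ofReal (|z.1 - z.2| ^ p) ∂(γ : Measure (ℝ × ℝ)) with hWv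
  have hMKu : MK1 p (μ₁.map (Rproj u)) (μ₂.map (Rproj u)) = Wu.toReal ^ (1/p) := rfl
  have hMKv : MK1 p (μ₁.map (Rproj v)) (μ₂.map (Rproj v)) = Wv.toReal ^ (1/p) := rfl
  set cc : ℝ≥0∞ := ENNReal.ofReal ‖(v : E) - (u : E)‖ * (m₁ ^ (1/p) + m₂ ^ (1/p)) with hcc
  have hccne : cc ≠ ⊤ := by
    rw [hcc, hm₁p, hm₂p]
    exact ENNReal.mul_ne_top ENNReal.ofReal_ne_top
      (ENNReal.add_ne_top.mpr ⟨ENNReal.ofReal_ne_top, ENNReal.ofReal_ne_top⟩)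
  have hWu_p_le : Wu ^ (1/p) ≤ m₁ ^ (1/p) + m₂ ^ (1/p) := by
    have hmem : Wu ≤ ∫⁻ z : ℝ × ℝ, ENNReal.ofReal (|z.1 - z.2| ^ p)
        ∂((μ₁.map (Rproj u)).prod (μ₂.map (Rproj u))) := by
      rw [hWu]
      exact iInf_le (fun γ : {γ : Measure (ℝ × ℝ) //
          IsCoupling γ (μ₁.map (Rproj u)) (μ₂.map (Rproj u))} =>
        ∫⁻ z, ENNReal.ofReal (|z.1 - z.2| ^ p) ∂(γ : Measure (ℝ × ℝ)))
        ⟨_, prod_coupling μ₁ μ₂ u⟩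
    exact le_trans (ENNReal.rpow_le_rpow hmem h1p.le) (prod_cost_le hp μ₁ μ₂ u)
  have hWu_p_ne : Wu ^ (1/p) ≠ ⊤ := by
    refine ne_top_of_le_ne_top ?_ hWu_p_le
    rw [hm₁p, hm₂p]
    exact ENNReal.add_ne_top.mpr ⟨ENNReal.ofReal_ne_top, ENNReal.ofReal_ne_top⟩
  have hWv_le : Wv ^ (1/p) ≤ Wu ^ (1/p) + cc := by
    have h1 : ∀ γ : {γ : Measure (ℝ × ℝ) //
        IsCoupling γ (μ₁.map (Rproj u)) (μ₂.map (Rproj u))},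
        Wv ^ (1/p) ≤
          (∫⁻ z, ENNReal.ofReal (|z.1 - z.2| ^ p) ∂(γ : Measure (ℝ × ℝ))) ^ (1/p) + cc := by
      intro γ
      obtain ⟨γ', hc, hle⟩ := coupling_transport hp μ₁ μ₂ u v γ.1 γ.2
      refine le_trans (ENNReal.rpow_le_rpow ?_ h1p.le) hle
      rw [hWv]
      exact iInf_le (fun γ : {γ : Measure (ℝ × ℝ) //
          IsCoupling γ (μ₁.map (Rproj v)) (μ₂.map (Rproj v))} =>
        ∫⁻ z, ENNReal.ofReal (|z.1 - z.2| ^ p) ∂(γ : Measure (ℝ × ℝ))) ⟨γ', hc⟩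
    have h2 := le_iInf h1
    rw [← ENNReal.iInf_add] at h2
    refine le_trans h2 (add_le_add_left (le_of_eq ?_) cc)
    have h3 := OrderIso.map_iInf (ENNReal.orderIsoRpow (1/p) h1p)
      (fun γ : {γ : Measure (ℝ × ℝ) //
          IsCoupling γ (μ₁.map (Rproj u)) (μ₂.map (Rproj u))} =>
        ∫⁻ z, ENNReal.ofReal (|z.1 - z.2| ^ p) ∂(γ : Measure (ℝ × ℝ)))
    simp only [ENNReal.orderIsoRpow_apply] at h3
    rw [hWu]
    exact h3.symm
  calc MK1 p (μ₁.map (Rproj v)) (μ₂.map (Rproj v)) = (Wv ^ (1/p)).toReal := by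
        rw [hMKv, ENNReal.toReal_rpow]
    _ ≤ (Wu ^ (1/p) + cc).toReal :=
        ENNReal.toReal_mono (ENNReal.add_ne_top.mpr ⟨hWu_p_ne, hccne⟩) hWv_le
    _ = MK1 p (μ₁.map (Rproj u)) (μ₂.map (Rproj u)) +
          ‖(v : E) - (u : E)‖ * (I₁ ^ (1/p) + I₂ ^ (1/p)) := by
        rw [ENNReal.toReal_add hWu_p_ne hccne, hMKu, ENNReal.toReal_rpow, hcc, hm₁p, hm₂p,
          ← ENNReal.ofReal_add (Real.rpow_nonneg hI₁nn _) (Real.rpow_nonneg hI₂nn _),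
          ← ENNReal.ofReal_mul (norm_nonneg _),
          ENNReal.toReal_ofReal (mul_nonneg (norm_nonneg _)
            (add_nonneg (Real.rpow_nonneg hI₁nn _) (Real.rpow_nonneg hI₂nn _)))]

lemma mk1_nonneg (p : ℝ) (μ ν : Measure ℝ) : 0 ≤ MK1 p μ ν :=
  Real.rpow_nonneg ENNReal.toReal_nonneg _

lemma mk1_bdd (hp : 1 < p) (μ₁ μ₂ : Measure E) [IsProbabilityMeasure μ₁]
    [IsProbabilityMeasure μ₂]
    (hμ₁ : Integrable (fun x => ‖x‖ ^ p) μ₁) (hμ₂ : Integrable (fun x => ‖x‖ ^ p) μ₂)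
    (u : Sph n) :
    MK1 p (μ₁.map (Rproj u)) (μ₂.map (Rproj u)) ≤
      (∫ x, ‖x‖ ^ p ∂μ₁) ^ (1/p) + (∫ x, ‖x‖ ^ p ∂μ₂) ^ (1/p) := by
  have hp0 : (0:ℝ) < p := lt_trans one_pos hp
  have h1p : (0:ℝ) < 1/p := by positivity
  set I₁ : ℝ := ∫ x, ‖x‖ ^ p ∂μ₁ with hI₁
  set I₂ : ℝ := ∫ x, ‖x‖ ^ p ∂μ₂ with hI₂
  have hI₁nn : 0 ≤ I₁ := integral_nonneg fun x => Real.rpow_nonneg (norm_nonneg _) _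
  have hI₂nn : 0 ≤ I₂ := integral_nonneg fun x => Real.rpow_nonneg (norm_nonneg _) _
  have hm₁eq : (∫⁻ x, ENNReal.ofReal (‖x‖ ^ p) ∂μ₁) = ENNReal.ofReal I₁ := by
    rw [hI₁, ← ofReal_integral_eq_lintegral_ofReal hμ₁
      (Filter.Eventually.of_forall fun x => Real.rpow_nonneg (norm_nonneg _) _)]
  have hm₂eq : (∫⁻ x, ENNReal.ofReal (‖x‖ ^ p) ∂μ₂) = ENNReal.ofReal I₂ := by
    rw [hI₂, ← ofReal_integral_eq_lintegral_ofReal hμ₂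
      (Filter.Eventually.of_forall fun x => Real.rpow_nonneg (norm_nonneg _) _)]
  set Wu : ℝ≥0∞ := ⨅ γ : {γ : Measure (ℝ × ℝ) //
      IsCoupling γ (μ₁.map (Rproj u)) (μ₂.map (Rproj u))},
    ∫⁻ z, ENNReal.ofReal (|z.1 - z.2| ^ p) ∂(γ : Measure (ℝ × ℝ)) with hWu
  have hMKu : MK1 p (μ₁.map (Rproj u)) (μ₂.map (Rproj u)) = Wu.toReal ^ (1/p) := rfl
  have hWu_p_le : Wu ^ (1/p) ≤ ENNReal.ofReal (I₁ ^ (1/p) + I₂ ^ (1/p)) := by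
    have hmem : Wu ≤ ∫⁻ z : ℝ × ℝ, ENNReal.ofReal (|z.1 - z.2| ^ p)
        ∂((μ₁.map (Rproj u)).prod (μ₂.map (Rproj u))) := by
      rw [hWu]
      exact iInf_le (fun γ : {γ : Measure (ℝ × ℝ) //
          IsCoupling γ (μ₁.map (Rproj u)) (μ₂.map (Rproj u))} =>
        ∫⁻ z, ENNReal.ofReal (|z.1 - z.2| ^ p) ∂(γ : Measure (ℝ × ℝ)))
        ⟨_, prod_coupling μ₁ μ₂ u⟩
    refine le_trans (ENNReal.rpow_le_rpow hmem h1p.le) ?_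
    refine le_trans (prod_cost_le hp μ₁ μ₂ u) (le_of_eq ?_)
    rw [hm₁eq, hm₂eq, ENNReal.ofReal_rpow_of_nonneg hI₁nn h1p.le,
      ENNReal.ofReal_rpow_of_nonneg hI₂nn h1p.le,
      ← ENNReal.ofReal_add (Real.rpow_nonneg hI₁nn _) (Real.rpow_nonneg hI₂nn _)]
  calc MK1 p (μ₁.map (Rproj u)) (μ₂.map (Rproj u))
      = (Wu ^ (1/p)).toReal := by rw [hMKu, ENNReal.toReal_rpow]
    _ ≤ (ENNReal.ofReal (I₁ ^ (1/p) + I₂ ^ (1/p))).toReal :=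
        ENNReal.toReal_mono ENNReal.ofReal_ne_top hWu_p_le
    _ = I₁ ^ (1/p) + I₂ ^ (1/p) :=
        ENNReal.toReal_ofReal (add_nonneg (Real.rpow_nonneg hI₁nn _) (Real.rpow_nonneg hI₂nn _))

end Core3

/-- Corollary (approximation of sliced Monge–Kantorovich distances by equal area partitions):
if `{D_l}` is a Borel partition of the sphere such that `σ_{n-1}`-a.e. point of `D_l` is within
geodesic distance `(α_{n,p}/2)·MK_p^{S^{n-1}}(σ_{n-1}, ν_ω)^{p/(n-1+p)}` of `ω_l`, then the
piecewise-constant approximation of the sliced distance is accurate up to that scale times the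
sum of the `p`-th moment `1/p`-powers of the two measures. -/
theorem sliced_MK_approximation (n : ℕ) (hn : 2 ≤ n) (p : ℝ) (hp : 1 < p)
    (q : ℝ≥0∞) (hq : 1 ≤ q) (L : ℕ) (hL : 1 ≤ L) (ω : Fin L → Sph n)
    (D : Fin L → Set (Sph n)) (hDmeas : ∀ l, MeasurableSet (D l))
    (hDdisj : Pairwise (Function.onFun Disjoint D)) (hDcover : (⋃ l, D l) = Set.univ)
    (hDnear : ∀ l, ∀ᵐ x ∂(sphProb n), x ∈ D l →
      gd x (ω l) ≤ (alphaC n p / 2) *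
        MKd gd p (sphProb n) (emp ω) ^ (p / ((n : ℝ) - 1 + p)))
    (μ₁ μ₂ : Measure (EuclideanSpace ℝ (Fin n)))
    [IsProbabilityMeasure μ₁] [IsProbabilityMeasure μ₂]
    (hμ₁ : Integrable (fun x => ‖x‖ ^ p) μ₁) (hμ₂ : Integrable (fun x => ‖x‖ ^ p) μ₂) :
    |(eLpNorm (fun x : Sph n => ∑ l, Set.indicator (D l)
          (fun _ => MK1 p (μ₁.map (Rproj (ω l))) (μ₂.map (Rproj (ω l)))) x)
        q (sphProb n)).toReal - MKpq n p q μ₁ μ₂| ≤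
      (alphaC n p / 2) * MKd gd p (sphProb n) (emp ω) ^ (p / ((n : ℝ) - 1 + p)) *
        ((∫ x, ‖x‖ ^ p ∂μ₁) ^ (1 / p) + (∫ x, ‖x‖ ^ p ∂μ₂) ^ (1 / p)) := by
  classical
  have hp0 : (0:ℝ) < p := lt_trans one_pos hp
  have h1p : (0:ℝ) < 1/p := by positivity
  have hexp : 0 < p / ((n : ℝ) - 1 + p) := by
    have h2n : (2:ℝ) ≤ (n : ℝ) := by exact_mod_cast hn
    have : 0 < (n : ℝ) - 1 + p := by linarith
    positivity
  by_cases hdeg : sphProb n = 0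
  · -- degenerate case: the normalized Hausdorff measure is the zero measure
    have hMKd : MKd gd p (sphProb n) (emp ω) = 0 := by
      haveI : IsEmpty {γ : Measure (Sph n × Sph n) // IsCoupling γ (sphProb n) (emp ω)} := by
        constructor
        rintro ⟨γ, hγp, hγ1, -⟩
        haveI := hγp
        have h1 : γ.map Prod.fst Set.univ = 1 := by
          rw [Measure.map_apply measurable_fst MeasurableSet.univ, Set.preimage_univ,
            measure_univ]
        rw [hγ1, hdeg] at h1
        simp at h1
      rw [MKd, iInf_of_empty, ENNReal.toReal_top]
      exact Real.zero_rpow (by positivity)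
    simp only [MKpq]
    rw [hMKd, Real.zero_rpow hexp.ne', mul_zero, zero_mul, hdeg,
      eLpNorm_measure_zero, eLpNorm_measure_zero]
    simp
  · -- the normalized measure is a probability measure
    haveI hprob : IsProbabilityMeasure (sphProb n) := by
      rcases eq_or_ne (μH[(n : ℝ) - 1] (Set.univ : Set (Sph n))) 0 with h0 | h0
      · exact absurd (by simp only [sphProb, Measure.measure_univ_eq_zero.mp h0,
          smul_zero]) hdeg
      rcases eq_or_ne (μH[(n : ℝ) - 1] (Set.univ : Set (Sph n))) ⊤ with hT | hT
      · exact absurd (by simp only [sphProb, hT, ENNReal.inv_top, zero_smul]) hdeg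
      exact ⟨by
        simp only [sphProb, Measure.smul_apply, smul_eq_mul]
        exact ENNReal.inv_mul_cancel h0 hT⟩
    set r : ℝ := (alphaC n p / 2) *
      MKd gd p (sphProb n) (emp ω) ^ (p / ((n : ℝ) - 1 + p)) with hrdef
    set I₁ : ℝ := ∫ x, ‖x‖ ^ p ∂μ₁ with hI₁
    set I₂ : ℝ := ∫ x, ‖x‖ ^ p ∂μ₂ with hI₂
    have hI₁nn : 0 ≤ I₁ := integral_nonneg fun x => Real.rpow_nonneg (norm_nonneg _) _
    have hI₂nn : 0 ≤ I₂ := integral_nonneg fun x => Real.rpow_nonneg (norm_nonneg _) _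
    set B : ℝ := I₁ ^ (1/p) + I₂ ^ (1/p) with hB
    have hBnn : 0 ≤ B := add_nonneg (Real.rpow_nonneg hI₁nn _) (Real.rpow_nonneg hI₂nn _)
    set F : Sph n → ℝ := fun x => MK1 p (μ₁.map (Rproj x)) (μ₂.map (Rproj x)) with hF
    set G : Sph n → ℝ := fun x => ∑ l, Set.indicator (D l)
      (fun _ => MK1 p (μ₁.map (Rproj (ω l))) (μ₂.map (Rproj (ω l)))) x with hG
    -- r is nonnegative
    have hr0 : 0 ≤ r := by
      by_contra hneg
      push_neg at hneg
      have hDnull : ∀ l, sphProb n (D l) = 0 := by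
        intro l
        refine measure_eq_zero_iff_ae_notMem.mpr ?_
        filter_upwards [hDnear l] with x hx hmem
        have h1 : gd x (ω l) ≤ r := hx hmem
        have h2 : (0:ℝ) ≤ gd x (ω l) := Real.arccos_nonneg _
        linarith
      have hz : sphProb n (⋃ l, D l) = 0 := measure_iUnion_null hDnull
      rw [hDcover, measure_univ] at hz
      exact one_ne_zero hz
    -- two-sided Lipschitz estimate for the sliced distance
    have hFlip : ∀ u v : Sph n, F v ≤ F u +
        ‖(v : EuclideanSpace ℝ (Fin n)) - (u : EuclideanSpace ℝ (Fin n))‖ * B :=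
      fun u v => mk1_lip hp μ₁ μ₂ hμ₁ hμ₂ u v
    have hFabs : ∀ u v : Sph n, |F v - F u| ≤
        ‖(v : EuclideanSpace ℝ (Fin n)) - (u : EuclideanSpace ℝ (Fin n))‖ * B := by
      intro u v
      rw [abs_sub_le_iff]
      constructor
      · linarith [hFlip u v]
      · have h1 := hFlip v u
        have h2 : ‖(u : EuclideanSpace ℝ (Fin n)) - (v : EuclideanSpace ℝ (Fin n))‖
            = ‖(v : EuclideanSpace ℝ (Fin n)) - (u : EuclideanSpace ℝ (Fin n))‖ :=
          norm_sub_rev _ _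
        linarith [h2 ▸ h1]
    -- representation of G
    have hGrep : ∀ x : Sph n, ∃ l, x ∈ D l ∧ G x = F (ω l) := by
      intro x
      have hx : x ∈ ⋃ l, D l := by rw [hDcover]; trivial
      obtain ⟨l, hl⟩ : ∃ l, x ∈ D l := by simpa using hx
      refine ⟨l, hl, ?_⟩
      have hGx : G x = ∑ l', Set.indicator (D l')
          (fun _ => MK1 p (μ₁.map (Rproj (ω l'))) (μ₂.map (Rproj (ω l')))) x := rfl
      rw [hGx, Finset.sum_eq_single l]
      · rw [Set.indicator_of_mem hl]
      · intro b _ hb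
        refine Set.indicator_of_notMem (fun hmem => ?_) _
        exact Set.disjoint_left.mp (hDdisj hb) hmem hl
      · exact fun habs => absurd (Finset.mem_univ l) habs
    -- the a.e. bound
    have haeGF : ∀ᵐ x ∂(sphProb n), |G x - F x| ≤ r * B := by
      have hall : ∀ᵐ x ∂(sphProb n), ∀ l, x ∈ D l → gd x (ω l) ≤ r :=
        (ae_all_iff).mpr hDnear
      filter_upwards [hall] with x hx
      obtain ⟨l, hl, hGx⟩ := hGrep x
      have hgd : gd x (ω l) ≤ r := hx l hl
      have hchord : ‖(x : EuclideanSpace ℝ (Fin n)) - (ω l : EuclideanSpace ℝ (Fin n))‖ ≤ r :=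
        le_trans (chord_le_gd x (ω l)) hgd
      rw [hGx]
      calc |F (ω l) - F x| ≤
          ‖(ω l : EuclideanSpace ℝ (Fin n)) - (x : EuclideanSpace ℝ (Fin n))‖ * B :=
            hFabs x (ω l)
        _ = ‖(x : EuclideanSpace ℝ (Fin n)) - (ω l : EuclideanSpace ℝ (Fin n))‖ * B := by
            rw [norm_sub_rev]
        _ ≤ r * B := mul_le_mul_of_nonneg_right hchord hBnn
    -- bounds
    have hFnn : ∀ x : Sph n, 0 ≤ F x := fun x => mk1_nonneg _ _ _
    have hFbd : ∀ x : Sph n, |F x| ≤ B := fun x => by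
      rw [abs_of_nonneg (hFnn x)]
      exact mk1_bdd hp μ₁ μ₂ hμ₁ hμ₂ x
    have hGbd : ∀ x : Sph n, |G x| ≤ B := fun x => by
      obtain ⟨l, -, hGx⟩ := hGrep x
      rw [hGx]; exact hFbd (ω l)
    -- measurability
    have hFm : AEStronglyMeasurable F (sphProb n) := by
      have hlip : LipschitzWith (Real.toNNReal B) F := by
        refine LipschitzWith.of_dist_le_mul fun u v => ?_
        rw [Real.dist_eq, Real.coe_toNNReal _ hBnn]
        calc |F u - F v| ≤
            ‖(u : EuclideanSpace ℝ (Fin n)) - (v : EuclideanSpace ℝ (Fin n))‖ * B :=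
              hFabs v u
          _ = B * dist u v := by
              rw [Subtype.dist_eq, dist_eq_norm]; ring
      exact hlip.continuous.aestronglyMeasurable
    have hGm : AEStronglyMeasurable G (sphProb n) := by
      have : Measurable G := by
        rw [hG]
        exact Finset.measurable_sum _ fun l _ => measurable_const.indicator (hDmeas l)
      exact this.aestronglyMeasurable
    -- eLpNorm estimates
    have hbound : ∀ (f : Sph n → ℝ) (C : ℝ), (∀ᵐ x ∂(sphProb n), ‖f x‖ ≤ C) →
        eLpNorm f q (sphProb n) ≤ ENNReal.ofReal C := by
      intro f C hC
      refine le_trans (eLpNorm_le_of_ae_bound hC) (le_of_eq ?_)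
      rw [measure_univ, ENNReal.one_rpow, one_mul]
    have hFfin : eLpNorm F q (sphProb n) ≠ ⊤ := by
      refine ne_top_of_le_ne_top ENNReal.ofReal_ne_top
        (hbound F B (Filter.Eventually.of_forall fun x => ?_))
      rw [Real.norm_eq_abs]; exact hFbd x
    have hGfin : eLpNorm G q (sphProb n) ≠ ⊤ := by
      refine ne_top_of_le_ne_top ENNReal.ofReal_ne_top
        (hbound G B (Filter.Eventually.of_forall fun x => ?_))
      rw [Real.norm_eq_abs]; exact hGbd x
    have hdiff : eLpNorm (G - F) q (sphProb n) ≤ ENNReal.ofReal (r * B) := by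
      refine hbound _ _ ?_
      filter_upwards [haeGF] with x hx
      rw [Pi.sub_apply, Real.norm_eq_abs]
      exact hx
    have hdiff' : eLpNorm (F - G) q (sphProb n) ≤ ENNReal.ofReal (r * B) := by
      refine hbound _ _ ?_
      filter_upwards [haeGF] with x hx
      rw [Pi.sub_apply, Real.norm_eq_abs, abs_sub_comm]
      exact hx
    have h1 : eLpNorm G q (sphProb n) ≤ eLpNorm F q (sphProb n) + ENNReal.ofReal (r * B) := by
      have hGeq : G = F + (G - F) := by funext x; simp
      calc eLpNorm G q (sphProb n) = eLpNorm (F + (G - F)) q (sphProb n) := by rw [← hGeq]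
        _ ≤ eLpNorm F q (sphProb n) + eLpNorm (G - F) q (sphProb n) :=
            eLpNorm_add_le hFm (hGm.sub hFm) hq
        _ ≤ _ := add_le_add_right hdiff _
    have h2 : eLpNorm F q (sphProb n) ≤ eLpNorm G q (sphProb n) + ENNReal.ofReal (r * B) := by
      have hFeq : F = G + (F - G) := by funext x; simp
      calc eLpNorm F q (sphProb n) = eLpNorm (G + (F - G)) q (sphProb n) := by rw [← hFeq]
        _ ≤ eLpNorm G q (sphProb n) + eLpNorm (F - G) q (sphProb n) :=
            eLpNorm_add_le hGm (hFm.sub hGm) hq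
        _ ≤ _ := add_le_add_right hdiff' _
    -- conclude
    have hrBnn : 0 ≤ r * B := mul_nonneg hr0 hBnn
    have hfin1 : eLpNorm F q (sphProb n) + ENNReal.ofReal (r * B) ≠ ⊤ :=
      ENNReal.add_ne_top.mpr ⟨hFfin, ENNReal.ofReal_ne_top⟩
    have hfin2 : eLpNorm G q (sphProb n) + ENNReal.ofReal (r * B) ≠ ⊤ :=
      ENNReal.add_ne_top.mpr ⟨hGfin, ENNReal.ofReal_ne_top⟩
    have ht1 := ENNReal.toReal_mono hfin1 h1
    have ht2 := ENNReal.toReal_mono hfin2 h2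
    rw [ENNReal.toReal_add hFfin ENNReal.ofReal_ne_top, ENNReal.toReal_ofReal hrBnn] at ht1
    rw [ENNReal.toReal_add hGfin ENNReal.ofReal_ne_top, ENNReal.toReal_ofReal hrBnn] at ht2
    have hgoal : |(eLpNorm G q (sphProb n)).toReal - (eLpNorm F q (sphProb n)).toReal| ≤
        r * B := by
      rw [abs_sub_le_iff]
      exact ⟨by linarith, by linarith⟩
    simpa only [MKpq, hG, hF, hB, hI₁, hI₂, hrdef] using hgoal


end
end

section
/- Let p ≥ 2 be a real number. Then for every t ∈ (0, 1/2), one has t > sin^p(πt/2); that is, β_p(t) := t − sin^p(πt/2) is strictly positive on (0, 1/2). -/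
open Real Set

/-- For real `p ≥ 2`, `sin^p(πt/2) < t` for all `t ∈ (0, 1/2)`; equivalently,
`β_p(t) := t - sin^p(πt/2)` is strictly positive on `(0, 1/2)`. -/
theorem beta_pos_of_two_le (p : ℝ) (hp : 2 ≤ p) :
    ∀ t ∈ Set.Ioo (0 : ℝ) (1 / 2), Real.sin (π * t / 2) ^ p < t := by
  intro t ht
  obtain ⟨ht0, ht1⟩ := ht
  have hpi := Real.pi_pos
  have hs0 : 0 < Real.sin (π * t / 2) := by
    apply Real.sin_pos_of_pos_of_lt_pi
    · positivity
    · nlinarith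
  have hs1 : Real.sin (π * t / 2) ≤ 1 := Real.sin_le_one _
  have h1 : Real.sin (π * t / 2) ^ p ≤ Real.sin (π * t / 2) ^ (2 : ℝ) :=
    Real.rpow_le_rpow_of_exponent_ge hs0 hs1 hp
  have h2 : Real.sin (π * t / 2) ^ (2 : ℝ) = Real.sin (π * t / 2) ^ 2 := by
    rw [← Real.rpow_natCast (Real.sin (π * t / 2)) 2]; norm_num
  have hcos : 1 - 2 * t < Real.cos (π * t) := by
    have hm0 : (0:ℝ) ∈ Icc (-(π/2)) (π/2) := by constructor <;> nlinarith
    have hm1 : π/2 ∈ Icc (-(π/2)) (π/2) := by constructor <;> nlinarith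
    have hne : (0:ℝ) ≠ π/2 := by positivity
    have hc := strictConcaveOn_cos_Icc.2 hm0 hm1 hne
      (show (0:ℝ) < 1 - 2*t by linarith) (show (0:ℝ) < 2*t by linarith) (by ring)
    simp only [smul_eq_mul, mul_zero, zero_add, Real.cos_zero, Real.cos_pi_div_two,
      mul_one] at hc
    have : (2 * t) * (π / 2) = π * t := by ring
    rw [this] at hc
    linarith
  have key : Real.sin (π * t / 2) ^ 2 < t := by
    have hsq := Real.sin_sq_eq_half_sub (π * t / 2)
    have : 2 * (π * t / 2) = π * t := by ring
    rw [this] at hsq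
    linarith
  calc Real.sin (π * t / 2) ^ p ≤ Real.sin (π * t / 2) ^ (2 : ℝ) := h1
    _ = Real.sin (π * t / 2) ^ 2 := h2
    _ < t := key
end
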